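/- arXiv:funct-an/9612003 — 4 statements merged into one kernel-verified Lean document; each statement's English description precedes it below -/
import Mathlib

section
/- Let (Ω, μ) be a probability space, let σ_0, …, σ_{N−1} : Ω → Ω be measurable maps whose ranges are pairwise essentially disjoint and cover Ω up to null sets, satisfying μ(σ_i(Y)) = ρ_i μ(Y) for all measurable Y ⊂ Ω, where ρ_i > 0 and ∑_i ρ_i = 1, and let σ : Ω → Ω be the measurable N-to-1 map determined (up to null sets) by σ ∘ σ_i = id for each i. Let S_0, …, S_{N−1} be bounded operators on L²(Ω, μ) satisfying the Cuntz relations S_i* S_j = δ_{ij}·1 and ∑_{i=0}^{N−1} S_i S_i* = 1. Then the following are equivalent: (i) there exist functions m_i ∈ L^∞(Ω, μ) such that (S_i ξ)(x) = m_i(x) ξ(σ(x)) for all ξ ∈ L²(Ω, μ) and almost every x ∈ Ω; (ii) ∑_{i=0}^{N−1} S_i M_f S_i* = M_{f∘σ} for all f ∈ L^∞(Ω, μ), where M_f denotes the operator of multiplication by f on L²(Ω, μ). Furthermore, when these conditions hold, m_i = S_i 1 (the image of the constant function 1). -/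
/-!
The scaling law and the covering property give `μ = ∑ ρᵢ • σᵢ_* μ`; together with `σ ∘ σᵢ = id`
this makes `σ` measure preserving.

(i) ⇒ (ii): a weighted composition operator `S ξ = m · ξ∘σ` satisfies `S M_f = M_{f∘σ} S`, so
`∑ Sᵢ M_f Sᵢ* = M_{f∘σ} ∑ Sᵢ Sᵢ* = M_{f∘σ}`.

(ii) ⇒ (i): multiplying (ii) on the right by `Sⱼ` and using `Sᵢ* Sⱼ = δᵢⱼ` gives
`M_{f∘σ} Sⱼ = Sⱼ M_f`; applied to `1` this reads `Sⱼ f = (f∘σ) mⱼ` with `mⱼ = Sⱼ 1`, first for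
bounded `f` and then on all of `L²` by density, once `mⱼ` is known to be bounded. Boundedness
comes from `Sⱼ` being an isometry: for `w = |mⱼ|²` it gives `∫_{σ⁻¹E} w = μ E` for every `E`, which
the decomposition of `μ` turns into `∑ ρᵢ w∘σᵢ = 1` a.e.; hence `w∘σᵢ ≤ ρᵢ⁻¹`, and `w ≤ ∑ ρᵢ⁻¹` a.e.
because almost every point is `σᵢ (σ x)`.
-/

open MeasureTheory ENNReal

section CuntzRelations

variable {A ι : Type*} [Semiring A] [Fintype ι] {S S' : ι → A} {M M' : A}

theorem sum_mul_mul_eq_of_mul_eq (hsum : ∑ i, S i * S' i = 1) (h : ∀ i, S i * M = M' * S i) :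
    ∑ i, S i * M * S' i = M' := by
  simp_rw [h, mul_assoc, ← Finset.mul_sum, hsum, mul_one]

theorem mul_eq_of_sum_mul_mul_eq [DecidableEq ι]
    (horth : ∀ i j, S' i * S j = if i = j then 1 else 0) (h : ∑ i, S i * M * S' i = M') (j : ι) :
    M' * S j = S j * M := by
  rw [← h, Finset.sum_mul, Finset.sum_eq_single j]
  · rw [mul_assoc, horth, if_pos rfl, mul_one]
  · intro i _ hij
    rw [mul_assoc, horth, if_neg hij, mul_zero]
  · simp

end CuntzRelations

section Branches

variable {Ω ι : Type*} [MeasurableSpace Ω] {μ : Measure Ω} {σi : ι → Ω → Ω} {σ : Ω → Ω}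

theorem ae_of_forall_ae_comp [Countable ι] (hσ : Measure.QuasiMeasurePreserving σ μ μ)
    (hcover : ∀ᵐ x ∂μ, ∃ i, σi i (σ x) = x) {P : Ω → Prop} (h : ∀ i, ∀ᵐ y ∂μ, P (σi i y)) :
    ∀ᵐ x ∂μ, P x := by
  filter_upwards [hcover, hσ.ae (ae_all_iff.2 h)] with x ⟨i, hi⟩ hx
  exact hi ▸ hx i

variable [Fintype ι] {ρ : ι → ℝ≥0∞}

theorem measure_eq_sum_smul_map [IsFiniteMeasure μ] (hσi : ∀ i, Measurable (σi i))
    (hρ : ∑ i, ρ i = 1) (hcover : ∀ᵐ x ∂μ, ∃ i, σi i (σ x) = x)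
    (hscale : ∀ i, ∀ Y, MeasurableSet Y → μ (σi i '' Y) = ρ i * μ Y) :
    μ = ∑ i, ρ i • μ.map (σi i) := by
  have happly : ∀ E, MeasurableSet E →
      (∑ i, ρ i • μ.map (σi i)) E = ∑ i, μ (σi i '' (σi i ⁻¹' E)) := by
    intro E hE
    simp only [Measure.coe_finsetSum, Finset.sum_apply, Measure.smul_apply, smul_eq_mul,
      Measure.map_apply (hσi _) hE, hscale _ _ (hσi _ hE)]
  refine Measure.eq_of_le_of_measure_univ_eq (Measure.le_iff.2 fun E hE => ?_) ?_
  · rw [happly E hE]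
    calc μ E ≤ μ (⋃ i, σi i '' (σi i ⁻¹' E)) :=
          measure_mono_ae <| hcover.mono fun x ⟨i, hi⟩ hxE =>
            Set.mem_iUnion.2 ⟨i, σ x, by rwa [Set.mem_preimage, hi], hi⟩
      _ ≤ _ := measure_iUnion_fintype_le μ _
  · simp [Measure.map_apply (hσi _) .univ, ← Finset.sum_mul, hρ]

theorem measurePreserving_of_eq_sum_smul_map (hσ : Measurable σ) (hσi : ∀ i, Measurable (σi i))
    (hρ : ∑ i, ρ i = 1) (hinv : ∀ i, ∀ᵐ x ∂μ, σ (σi i x) = x)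
    (hdecomp : μ = ∑ i, ρ i • μ.map (σi i)) : MeasurePreserving σ μ μ := by
  refine ⟨hσ, Measure.ext fun E hE => ?_⟩
  have hpre : ∀ i, μ (σi i ⁻¹' (σ ⁻¹' E)) = μ E := fun i =>
    measure_congr <| (hinv i).mono fun x hx => by
      change (σ (σi i x) ∈ E) = (x ∈ E)
      rw [hx]
  rw [Measure.map_apply hσ hE]
  conv_lhs => rw [hdecomp]
  simp only [Measure.coe_finsetSum, Finset.sum_apply, Measure.smul_apply, smul_eq_mul,
    Measure.map_apply (hσi _) (hσ hE), hpre, ← Finset.sum_mul, hρ, one_mul]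

theorem lintegral_eq_sum_mul_lintegral_comp (hσi : ∀ i, Measurable (σi i))
    (hdecomp : μ = ∑ i, ρ i • μ.map (σi i)) {g : Ω → ℝ≥0∞} (hg : Measurable g) :
    ∫⁻ x, g x ∂μ = ∑ i, ρ i * ∫⁻ y, g (σi i y) ∂μ := by
  conv_lhs => rw [hdecomp]
  simp only [lintegral_finsetSum_measure, lintegral_smul_measure, lintegral_map hg (hσi _),
    smul_eq_mul]

theorem ae_sum_mul_comp_eq_one [SigmaFinite μ] (hσ : Measurable σ) (hσi : ∀ i, Measurable (σi i))
    (hinv : ∀ i, ∀ᵐ x ∂μ, σ (σi i x) = x) (hdecomp : μ = ∑ i, ρ i • μ.map (σi i))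
    {w : Ω → ℝ≥0∞} (hw : Measurable w)
    (hpush : ∀ E, MeasurableSet E → ∫⁻ x in σ ⁻¹' E, w x ∂μ = μ E) :
    ∀ᵐ y ∂μ, ∑ i, ρ i * w (σi i y) = 1 := by
  refine ae_eq_of_forall_setLIntegral_eq_of_sigmaFinite
    (Finset.measurable_sum _ fun i _ => (hw.comp (hσi i)).const_mul _) measurable_const
    fun E hE _ => ?_
  have hbranch : ∀ i, ∫⁻ y in E, w (σi i y) ∂μ = ∫⁻ y, (σ ⁻¹' E).indicator w (σi i y) ∂μ := by
    intro i
    rw [← lintegral_indicator hE]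
    exact lintegral_congr_ae ((hinv i).mono fun y hy => by
      classical
      simp only [Set.indicator_apply, Set.mem_preimage, hy])
  calc ∫⁻ y in E, ∑ i, ρ i * w (σi i y) ∂μ = ∑ i, ρ i * ∫⁻ y in E, w (σi i y) ∂μ := by
        rw [lintegral_finsetSum (f := fun i y => ρ i * w (σi i y)) _
          fun i _ => (hw.comp (hσi i)).const_mul _]
        exact Finset.sum_congr rfl fun i _ => lintegral_const_mul _ (hw.comp (hσi i))
    _ = ∫⁻ x, (σ ⁻¹' E).indicator w x ∂μ := by
        rw [lintegral_eq_sum_mul_lintegral_comp hσi hdecomp (hw.indicator (hσ hE))]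
        simp only [hbranch]
    _ = ∫⁻ _ in E, 1 ∂μ := by
        rw [lintegral_indicator (hσ hE), hpush E hE, setLIntegral_one]

theorem ae_le_sum_inv [SigmaFinite μ] (hσ : Measure.QuasiMeasurePreserving σ μ μ)
    (hσi : ∀ i, Measurable (σi i)) (hcover : ∀ᵐ x ∂μ, ∃ i, σi i (σ x) = x)
    (hinv : ∀ i, ∀ᵐ x ∂μ, σ (σi i x) = x) (hdecomp : μ = ∑ i, ρ i • μ.map (σi i))
    {w : Ω → ℝ≥0∞} (hw : Measurable w)
    (hpush : ∀ E, MeasurableSet E → ∫⁻ x in σ ⁻¹' E, w x ∂μ = μ E) :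
    ∀ᵐ x ∂μ, w x ≤ ∑ i, (ρ i)⁻¹ := by
  have hsum := ae_sum_mul_comp_eq_one hσ.measurable hσi hinv hdecomp hw hpush
  refine ae_of_forall_ae_comp hσ hcover fun i => hsum.mono fun y hy => ?_
  calc w (σi i y) ≤ (ρ i)⁻¹ := ENNReal.le_inv_iff_mul_le.2 <| by
        rw [mul_comm, ← hy]
        exact Finset.single_le_sum (f := fun j => ρ j * w (σi j y)) (fun j _ => zero_le)
          (Finset.mem_univ i)
    _ ≤ ∑ j, (ρ j)⁻¹ :=
        Finset.single_le_sum (f := fun j => (ρ j)⁻¹) (fun j _ => zero_le) (Finset.mem_univ i)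

end Branches

theorem MeasureTheory.Lp.eq_of_forall_memLp_top {Ω E F : Type*} [MeasurableSpace Ω]
    {μ : Measure Ω} [IsFiniteMeasure μ] [NormedAddCommGroup E] {p : ℝ≥0∞} [Fact (1 ≤ p)]
    (hp : p ≠ ∞) [TopologicalSpace F] [T2Space F] {T U : Lp E p μ → F}
    (hT : Continuous T) (hU : Continuous U)
    (h : ∀ (f : Ω → E) (hf : MemLp f ∞ μ),
      T ((hf.mono_exponent le_top).toLp f) = U ((hf.mono_exponent le_top).toLp f)) :
    T = U := by
  refine (Lp.simpleFunc.denseRange hp).equalizer hT hU (funext fun s => ?_)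
  let g := Lp.simpleFunc.toSimpleFunc s
  have hs : (s : Lp E p μ) = ((SimpleFunc.memLp_top g μ).mono_exponent le_top).toLp g :=
    (Lp.toLp_coeFn (s : Lp E p μ) (Lp.memLp _)).symm.trans
      (MemLp.toLp_congr _ _ (Lp.simpleFunc.toSimpleFunc_eq_toFun s).symm)
  simp only [Function.comp_apply, hs]
  exact h g (SimpleFunc.memLp_top g μ)

section MultiplicationOperator

variable {Ω 𝕜 : Type*} [MeasurableSpace Ω] {μ : Measure Ω} [RCLike 𝕜] {p : ℝ≥0∞} [Fact (1 ≤ p)]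

noncomputable def multiplicationOperator (f : Ω → 𝕜) (hf : MemLp f ∞ μ) :
    Lp 𝕜 p μ →L[𝕜] Lp 𝕜 p μ :=
  (ContinuousLinearMap.mul 𝕜 𝕜).holderL μ ∞ p p (hf.toLp f)

theorem coeFn_multiplicationOperator (f : Ω → 𝕜) (hf : MemLp f ∞ μ) (ξ : Lp 𝕜 p μ) :
    multiplicationOperator f hf ξ =ᵐ[μ] fun x => f x * ξ x := by
  filter_upwards [ContinuousLinearMap.coeFn_holder (r := p) (ContinuousLinearMap.mul 𝕜 𝕜)
    (hf.toLp f) ξ, hf.coeFn_toLp] with x h1 h2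
  exact h1.trans (by rw [ContinuousLinearMap.mul_apply', h2])

end MultiplicationOperator

section WeightedComposition

variable {Ω 𝕜 : Type*} [MeasurableSpace Ω] {μ : Measure Ω} [RCLike 𝕜] {p : ℝ≥0∞} [Fact (1 ≤ p)]
  {σ : Ω → Ω}

theorem mul_eq_mul_of_weightedComposition (hσ : Measure.QuasiMeasurePreserving σ μ μ)
    {S Mf Mfσ : Lp 𝕜 p μ →L[𝕜] Lp 𝕜 p μ} {m f : Ω → 𝕜}
    (hS : ∀ ξ : Lp 𝕜 p μ, S ξ =ᵐ[μ] fun x => m x * ξ (σ x))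
    (hMf : ∀ ξ : Lp 𝕜 p μ, Mf ξ =ᵐ[μ] fun x => f x * ξ x)
    (hMfσ : ∀ ξ : Lp 𝕜 p μ, Mfσ ξ =ᵐ[μ] fun x => f (σ x) * ξ x) :
    S * Mf = Mfσ * S := by
  ext1 ξ
  refine Lp.ext ?_
  filter_upwards [hS (Mf ξ), hσ.ae_eq (hMf ξ), hMfσ (S ξ), hS ξ] with x h1 h2 h3 h4
  simp only [Function.comp_apply] at h2
  rw [mul_apply_eq_comp, mul_apply_eq_comp, h1, h2, h3, h4]
  ring

theorem apply_toLp_ae_eq_mul_apply_one [IsFiniteMeasure μ] (hσ : MeasurePreserving σ μ μ)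
    {S : Lp 𝕜 p μ →L[𝕜] Lp 𝕜 p μ}
    (hS : ∀ f : Ω → 𝕜, MemLp f ∞ μ → ∀ Mf Mfσ : Lp 𝕜 p μ →L[𝕜] Lp 𝕜 p μ,
      (∀ ξ : Lp 𝕜 p μ, Mf ξ =ᵐ[μ] fun x => f x * ξ x) →
      (∀ ξ : Lp 𝕜 p μ, Mfσ ξ =ᵐ[μ] fun x => f (σ x) * ξ x) → Mfσ * S = S * Mf)
    {f : Ω → 𝕜} (hf : MemLp f ∞ μ) :
    S ((hf.mono_exponent le_top).toLp f) =ᵐ[μ]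
      fun x => f (σ x) * S ((memLp_const (1 : 𝕜)).toLp fun _ => 1) x := by
  have hfσ : MemLp (f ∘ σ) ∞ μ := hf.comp_measurePreserving hσ
  have hone : multiplicationOperator f hf ((memLp_const (1 : 𝕜)).toLp fun _ => 1 : Lp 𝕜 p μ)
      = (hf.mono_exponent le_top).toLp f := by
    refine Lp.ext ?_
    filter_upwards [coeFn_multiplicationOperator f hf
        ((memLp_const (1 : 𝕜)).toLp fun _ => 1 : Lp 𝕜 p μ),
      (memLp_const (1 : 𝕜)).coeFn_toLp (p := p) (μ := μ),
      (hf.mono_exponent (p := p) le_top).coeFn_toLp] with x h1 h2 h3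
    rw [h1, h2, h3, mul_one]
  rw [← hone, ← mul_apply_eq_comp, ← hS f hf _ (multiplicationOperator _ hfσ)
    (coeFn_multiplicationOperator f hf) (coeFn_multiplicationOperator _ hfσ), mul_apply_eq_comp]
  exact coeFn_multiplicationOperator _ hfσ _

theorem ae_eq_weightedComposition_of_apply_toLp [IsFiniteMeasure μ] (hp : p ≠ ∞)
    (hσ : MeasurePreserving σ μ μ) {S : Lp 𝕜 p μ →L[𝕜] Lp 𝕜 p μ} {m : Ω → 𝕜} (hm : MemLp m ∞ μ)
    (hS : ∀ (f : Ω → 𝕜) (hf : MemLp f ∞ μ),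
      S ((hf.mono_exponent le_top).toLp f) =ᵐ[μ] fun x => f (σ x) * m x)
    (ξ : Lp 𝕜 p μ) : S ξ =ᵐ[μ] fun x => m x * ξ (σ x) := by
  let T := (multiplicationOperator m hm).comp
    (Lp.compMeasurePreservingₗᵢ 𝕜 (p := p) σ hσ).toContinuousLinearMap
  have hT : ∀ ξ : Lp 𝕜 p μ, T ξ =ᵐ[μ] fun x => m x * ξ (σ x) := fun ξ => by
    filter_upwards [coeFn_multiplicationOperator m hm (Lp.compMeasurePreserving σ hσ ξ),
      Lp.coeFn_compMeasurePreserving ξ hσ] with x h1 h2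
    exact h1.trans (by rw [h2]; rfl)
  have hST : ⇑S = ⇑T := Lp.eq_of_forall_memLp_top hp S.continuous T.continuous fun f hf =>
    Lp.ext <| by
      filter_upwards [hS f hf, hT ((hf.mono_exponent le_top).toLp f),
        hσ.quasiMeasurePreserving.ae_eq (hf.mono_exponent (p := p) le_top).coeFn_toLp]
        with x h1 h2 h3
      simp only [Function.comp_apply] at h3
      rw [h1, h2, h3, mul_comm]
  rw [hST]
  exact hT ξ

theorem setLIntegral_preimage_enorm_rpow_eq [IsFiniteMeasure μ] (hp0 : p ≠ 0) (hp : p ≠ ∞)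
    (hσ : Measurable σ) {S : Lp 𝕜 p μ →L[𝕜] Lp 𝕜 p μ} (hiso : ∀ ξ, ‖S ξ‖ = ‖ξ‖) {m : Ω → 𝕜}
    (hS : ∀ (f : Ω → 𝕜) (hf : MemLp f ∞ μ),
      S ((hf.mono_exponent le_top).toLp f) =ᵐ[μ] fun x => f (σ x) * m x)
    {E : Set Ω} (hE : MeasurableSet E) :
    ∫⁻ x in σ ⁻¹' E, ‖m x‖ₑ ^ p.toReal ∂μ = μ E := by
  have h1 : MemLp (E.indicator fun _ => (1 : 𝕜)) ∞ μ := (memLp_top_const 1).indicator hE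
  let ζ : Lp 𝕜 p μ := (h1.mono_exponent le_top).toLp _
  have hnorm : eLpNorm (S ζ) p μ = eLpNorm ζ p μ := by
    rw [← Lp.enorm_def, ← Lp.enorm_def, ← ofReal_norm, ← ofReal_norm, hiso]
  have hind : (fun x => E.indicator (fun _ => (1 : 𝕜)) (σ x) * m x) = (σ ⁻¹' E).indicator m := by
    classical
    ext x
    by_cases hx : σ x ∈ E <;> simp [hx]
  rw [eLpNorm_congr_ae (hS _ h1), eLpNorm_congr_ae (h1.mono_exponent le_top).coeFn_toLp, hind,
    eLpNorm_indicator_eq_eLpNorm_restrict (hσ hE), eLpNorm_eq_lintegral_rpow_enorm_toReal hp0 hp,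
    eLpNorm_indicator_const hE hp0 hp, enorm_one, one_mul] at hnorm
  exact ENNReal.rpow_left_injective (one_div_ne_zero (ENNReal.toReal_pos hp0 hp).ne') hnorm

theorem memLp_top_of_isometry [IsFiniteMeasure μ] (hp0 : p ≠ 0) (hp : p ≠ ∞)
    {ι : Type*} [Fintype ι] {σi : ι → Ω → Ω} {ρ : ι → ℝ≥0∞}
    (hσ : Measure.QuasiMeasurePreserving σ μ μ) (hσi : ∀ i, Measurable (σi i)) (hρ : ∀ i, 0 < ρ i)
    (hcover : ∀ᵐ x ∂μ, ∃ i, σi i (σ x) = x) (hinv : ∀ i, ∀ᵐ x ∂μ, σ (σi i x) = x)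
    (hdecomp : μ = ∑ i, ρ i • μ.map (σi i))
    {S : Lp 𝕜 p μ →L[𝕜] Lp 𝕜 p μ} (hiso : ∀ ξ, ‖S ξ‖ = ‖ξ‖)
    {m : Ω → 𝕜} (hm : StronglyMeasurable m)
    (hS : ∀ (f : Ω → 𝕜) (hf : MemLp f ∞ μ),
      S ((hf.mono_exponent le_top).toLp f) =ᵐ[μ] fun x => f (σ x) * m x) :
    MemLp m ∞ μ := by
  have hbound := ae_le_sum_inv hσ hσi hcover hinv hdecomp
    (hm.measurable.enorm.pow_const p.toReal)
    fun E hE => setLIntegral_preimage_enorm_rpow_eq hp0 hp hσ.measurable hiso hS hE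
  have hp' : 0 < p.toReal := ENNReal.toReal_pos hp0 hp
  have hC : ∑ i, (ρ i)⁻¹ ≠ ∞ := ENNReal.sum_ne_top.2 fun i _ => ENNReal.inv_ne_top.2 (hρ i).ne'
  refine ⟨hm.aestronglyMeasurable, ?_⟩
  rw [eLpNorm_exponent_top]
  exact (eLpNormEssSup_le_of_ae_enorm_bound
    (hbound.mono fun x hx => (ENNReal.le_rpow_inv_iff hp').2 hx)).trans_lt
    (ENNReal.rpow_lt_top_of_nonneg (inv_nonneg.2 hp'.le) hC)

end WeightedComposition

theorem cuntz_family_eq_weighted_composition_iff_intertwines_multiplication_general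
    {Ω : Type*} [MeasurableSpace Ω] (μ : Measure Ω) [IsProbabilityMeasure μ]
    (N : ℕ)
    -- the maps σ₀, …, σ_{N-1} and the branching map σ
    (σi : Fin N → Ω → Ω) (hσi_meas : ∀ i, Measurable (σi i))
    (σ : Ω → Ω) (hσ_meas : Measurable σ)
    -- the weights ρᵢ > 0 with ∑ ρᵢ = 1
    (ρ : Fin N → ℝ≥0∞) (hρ_pos : ∀ i, 0 < ρ i) (hρ_sum : ∑ i, ρ i = 1)
    -- the ranges of the σᵢ are essentially disjoint and cover Ω up to null sets
    (hcover : ∀ᵐ x ∂μ, ∃ i, σi i (σ x) = x)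
    -- σ ∘ σᵢ = id up to null sets
    (hinv : ∀ i, ∀ᵐ x ∂μ, σ (σi i x) = x)
    -- scaling of the measure: μ(σᵢ(Y)) = ρᵢ μ(Y)
    (hscale : ∀ i, ∀ Y : Set Ω, MeasurableSet Y → μ (σi i '' Y) = ρ i * μ Y)
    -- a Cuntz family S₀, …, S_{N-1} on L²(Ω, μ)
    (S : Fin N → Lp ℂ 2 μ →L[ℂ] Lp ℂ 2 μ)
    (hCuntz₁ : ∀ i j, (ContinuousLinearMap.adjoint (S i)).comp (S j)
        = if i = j then (1 : Lp ℂ 2 μ →L[ℂ] Lp ℂ 2 μ) else 0)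
    (hCuntz₂ : ∑ i, (S i).comp (ContinuousLinearMap.adjoint (S i))
        = (1 : Lp ℂ 2 μ →L[ℂ] Lp ℂ 2 μ)) :
    -- (i) ↔ (ii)
    ((∃ m : Fin N → Ω → ℂ, ∀ i, MemLp (m i) ⊤ μ ∧
        ∀ ξ : Lp ℂ 2 μ, ⇑(S i ξ) =ᵐ[μ] fun x => m i x * ξ (σ x))
      ↔
      (∀ f : Ω → ℂ, MemLp f ⊤ μ →
        ∀ Mf Mfσ : Lp ℂ 2 μ →L[ℂ] Lp ℂ 2 μ,
          (∀ ξ : Lp ℂ 2 μ, ⇑(Mf ξ) =ᵐ[μ] fun x => f x * ξ x) →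
          (∀ ξ : Lp ℂ 2 μ, ⇑(Mfσ ξ) =ᵐ[μ] fun x => f (σ x) * ξ x) →
          ∑ i, (S i).comp (Mf.comp (ContinuousLinearMap.adjoint (S i))) = Mfσ))
    ∧
    -- furthermore, in that case mᵢ = Sᵢ 1
    (∀ m : Fin N → Ω → ℂ,
      (∀ i, MemLp (m i) ⊤ μ ∧
        ∀ ξ : Lp ℂ 2 μ, ⇑(S i ξ) =ᵐ[μ] fun x => m i x * ξ (σ x)) →
      ∀ i, m i =ᵐ[μ] ⇑(S i ((MeasureTheory.memLp_const (1 : ℂ)).toLp fun _ => (1 : ℂ)))) := by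
  have hdecomp := measure_eq_sum_smul_map hσi_meas hρ_sum hcover hscale
  have hσ := measurePreserving_of_eq_sum_smul_map hσ_meas hσi_meas hρ_sum hinv hdecomp
  have hiso : ∀ j ξ, ‖S j ξ‖ = ‖ξ‖ := fun j =>
    (S j).norm_map_iff_adjoint_comp_self.2 (by simpa using hCuntz₁ j j)
  simp only [← ContinuousLinearMap.mul_def, ← mul_assoc] at hCuntz₁ hCuntz₂ ⊢
  set one : Lp ℂ 2 μ := (memLp_const (1 : ℂ)).toLp fun _ => 1
  refine ⟨⟨fun ⟨m, hm⟩ f _ Mf Mfσ hMf hMfσ => ?_, fun h => ?_⟩, fun m hm i => ?_⟩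
  · exact sum_mul_mul_eq_of_mul_eq hCuntz₂ fun i =>
      mul_eq_mul_of_weightedComposition hσ.quasiMeasurePreserving (hm i).2 hMf hMfσ
  · have hS : ∀ j (f : Ω → ℂ) (hf : MemLp f ∞ μ),
        S j ((hf.mono_exponent le_top).toLp f) =ᵐ[μ] fun x => f (σ x) * S j one x :=
      fun j _ => apply_toLp_ae_eq_mul_apply_one hσ fun f hf Mf Mfσ hMf hMfσ =>
        mul_eq_of_sum_mul_mul_eq hCuntz₁ (h f hf Mf Mfσ hMf hMfσ) j
    have hm : ∀ j, MemLp (S j one) ∞ μ := fun j =>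
      memLp_top_of_isometry two_ne_zero ofNat_ne_top hσ.quasiMeasurePreserving hσi_meas hρ_pos
        hcover hinv hdecomp (hiso j) (Lp.stronglyMeasurable _) (hS j)
    exact ⟨fun j => S j one, fun j =>
      ⟨hm j, ae_eq_weightedComposition_of_apply_toLp ofNat_ne_top hσ (hm j) (hS j)⟩⟩
  · filter_upwards [(hm i).2 one,
      hσ.quasiMeasurePreserving.ae_eq (memLp_const (1 : ℂ)).coeFn_toLp] with x h1 h2
    simp only [Function.comp_apply] at h2
    rw [h1, h2, mul_one]

/-- **Proposition 1.1.** Characterization of Cuntz families on `L²(Ω, μ)` of the form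
`(Sᵢ ξ)(x) = mᵢ(x) ξ(σ(x))`. -/
theorem cuntz_family_eq_weighted_composition_iff_intertwines_multiplication
    {Ω : Type*} [MeasurableSpace Ω] (μ : Measure Ω) [IsProbabilityMeasure μ]
    (N : ℕ) (hN : 2 ≤ N)
    -- the maps σ₀, …, σ_{N-1} and the branching map σ
    (σi : Fin N → Ω → Ω) (hσi_meas : ∀ i, Measurable (σi i))
    (σ : Ω → Ω) (hσ_meas : Measurable σ)
    -- the weights ρᵢ > 0 with ∑ ρᵢ = 1
    (ρ : Fin N → ℝ≥0∞) (hρ_pos : ∀ i, 0 < ρ i) (hρ_sum : ∑ i, ρ i = 1)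
    -- the ranges of the σᵢ are essentially disjoint and cover Ω up to null sets
    (hdisj : ∀ i j, i ≠ j → μ (σi i '' Set.univ ∩ σi j '' Set.univ) = 0)
    (hcover : ∀ᵐ x ∂μ, ∃ i, σi i (σ x) = x)
    -- σ ∘ σᵢ = id up to null sets
    (hinv : ∀ i, ∀ᵐ x ∂μ, σ (σi i x) = x)
    -- scaling of the measure: μ(σᵢ(Y)) = ρᵢ μ(Y)
    (hscale : ∀ i, ∀ Y : Set Ω, MeasurableSet Y → μ (σi i '' Y) = ρ i * μ Y)
    -- a Cuntz family S₀, …, S_{N-1} on L²(Ω, μ)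
    (S : Fin N → Lp ℂ 2 μ →L[ℂ] Lp ℂ 2 μ)
    (hCuntz₁ : ∀ i j, (ContinuousLinearMap.adjoint (S i)).comp (S j)
        = if i = j then (1 : Lp ℂ 2 μ →L[ℂ] Lp ℂ 2 μ) else 0)
    (hCuntz₂ : ∑ i, (S i).comp (ContinuousLinearMap.adjoint (S i))
        = (1 : Lp ℂ 2 μ →L[ℂ] Lp ℂ 2 μ)) :
    -- (i) ↔ (ii)
    ((∃ m : Fin N → Ω → ℂ, ∀ i, MemLp (m i) ⊤ μ ∧
        ∀ ξ : Lp ℂ 2 μ, ⇑(S i ξ) =ᵐ[μ] fun x => m i x * ξ (σ x))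
      ↔
      (∀ f : Ω → ℂ, MemLp f ⊤ μ →
        ∀ Mf Mfσ : Lp ℂ 2 μ →L[ℂ] Lp ℂ 2 μ,
          (∀ ξ : Lp ℂ 2 μ, ⇑(Mf ξ) =ᵐ[μ] fun x => f x * ξ x) →
          (∀ ξ : Lp ℂ 2 μ, ⇑(Mfσ ξ) =ᵐ[μ] fun x => f (σ x) * ξ x) →
          ∑ i, (S i).comp (Mf.comp (ContinuousLinearMap.adjoint (S i))) = Mfσ))
    ∧
    -- furthermore, in that case mᵢ = Sᵢ 1
    (∀ m : Fin N → Ω → ℂ,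
      (∀ i, MemLp (m i) ⊤ μ ∧
        ∀ ξ : Lp ℂ 2 μ, ⇑(S i ξ) =ᵐ[μ] fun x => m i x * ξ (σ x)) →
      ∀ i, m i =ᵐ[μ] ⇑(S i ((MeasureTheory.memLp_const (1 : ℂ)).toLp fun _ => (1 : ℂ)))) :=
  cuntz_family_eq_weighted_composition_iff_intertwines_multiplication_general μ N σi hσi_meas σ
    hσ_meas ρ hρ_pos hρ_sum hcover hinv hscale S hCuntz₁ hCuntz₂
end

section
/- Let N ≥ 2, ρ = e^{2πi/N}, and let m_0, …, m_{N−1} ∈ L^∞(𝕋) be such that the N×N matrix C(z) with entries C(z)_{k,j} = N^{−1/2} m_j(ρ^k z) is unitary for almost every z ∈ 𝕋. Define the isometry T on L²(𝕋) by (T ξ)(z) = N^{−1/2} ∑_{k=0}^{N−1} m_k(z) ξ(ρ^k z^N), the isometry S_C on L²(𝕋; ℂ^N) by (S_C ξ)(z) = C(z) ξ(z^N), and the isometric embedding V : L²(𝕋) → L²(𝕋; ℂ^N) by (V ξ)(z) = N^{−1/2} (ξ(z), ξ(ρz), …, ξ(ρ^{N−1} z)). Then S_C V = V T, and the unitary subspaces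 of the Wold decompositions coincide under V: ⋂_{k≥1} S_C^k(L²(𝕋; ℂ^N)) = V( ⋂_{k≥1} T^k(L²(𝕋)) ). -/
open MeasureTheory Real

noncomputable section

instance : Fact (0 < 2 * Real.pi) := ⟨by positivity⟩

/-- The circle `𝕋 = ℝ/2πℤ`, written additively; `N • z` corresponds to `z ↦ z^N` and
`z + 2πk/N` corresponds to `ρ^k z` with `ρ = e^{2πi/N}`. -/
abbrev Circle2π : Type := AddCircle (2 * Real.pi)

/-- Normalized Haar (probability) measure on the circle. -/
abbrev haarT : Measure Circle2π := AddCircle.haarAddCircle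

/-- `L²(𝕋)`. -/
abbrev HT : Type := Lp ℂ 2 haarT

/-- `L²(𝕋; ℂᴺ)`. -/
abbrev HTn (N : ℕ) : Type := Lp (EuclideanSpace ℂ (Fin N)) 2 haarT

/-- The matrix `C(z)` with entries `C(z)_{k,j} = N^{-1/2} m_j(ρ^k z)`. -/
def Cmat (N : ℕ) (m : Fin N → Circle2π → ℂ) (z : Circle2π) : Matrix (Fin N) (Fin N) ℂ :=
  Matrix.of fun k j : Fin N =>
    (Real.sqrt N : ℂ)⁻¹ * m j (z + (((k : ℕ) : ℝ) * (2 * Real.pi / N) : ℝ))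

/-!
`V` intertwines `T` with `S_C` because `N • (z + ρᵏ) = N • z`. Row `k` of `C(z)` is row `0` of
`C(ρᵏ z)`, so a vector `C(z) ζ(z^N)` in the range of `S_C` is `V` applied to `√N` times its
`0`-th component; the same recipe inverts `V` on the left. Hence
`range S_C^(k+1) ⊆ V (range T^k) ⊆ range S_C^k`, and as `V` is injective it commutes with the
intersection over `k`.
-/

namespace Function.Semiconj

open Set

variable {α β : Type*} {V : α → β} {T : α → α} {S : β → β}

theorem range_iterate_succ_subset_image (h : Semiconj V T S) (hS : range S ⊆ range V) (k : ℕ) :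
    range S^[k + 1] ⊆ V '' range T^[k] := by
  rintro _ ⟨ζ, rfl⟩
  obtain ⟨ξ, hξ⟩ := hS (mem_range_self ζ)
  exact ⟨T^[k] ξ, mem_range_self ξ, by rw [iterate_succ_apply, ← hξ, (h.iterate_right k).eq]⟩

theorem image_range_iterate_subset (h : Semiconj V T S) (k : ℕ) :
    V '' range T^[k] ⊆ range S^[k] := by
  rw [← range_comp, (h.iterate_right k).comp_eq]
  exact range_comp_subset_range _ _

theorem iInter_range_iterate_succ_eq_image (h : Semiconj V T S) (hS : range S ⊆ range V)
    (hV : Injective V) :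
    ⋂ k : ℕ, range S^[k + 1] = V '' ⋂ k : ℕ, range T^[k + 1] := by
  rw [(injOn_of_injective hV).image_iInter_eq]
  refine Subset.antisymm ?_ (iInter_mono fun k => h.image_range_iterate_subset (k + 1))
  exact subset_iInter fun k =>
    (iInter_subset _ (k + 1)).trans (h.range_iterate_succ_subset_image hS (k + 1))

end Function.Semiconj

def rootShift (N : ℕ) (k : Fin N) : Circle2π := (((k : ℕ) : ℝ) * (2 * π / N) : ℝ)

theorem nsmul_rootShift {N : ℕ} (k : Fin N) : N • rootShift N k = 0 := by
  have hN : (N : ℝ) ≠ 0 := Nat.cast_ne_zero.2 (Fin.pos k).ne'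
  rw [rootShift, ← AddCircle.coe_nsmul, AddCircle.coe_eq_zero_iff]
  exact ⟨k, by push_cast [nsmul_eq_mul, zsmul_eq_mul]; field_simp⟩

theorem nsmul_add_rootShift {N : ℕ} (z : Circle2π) (k : Fin N) :
    N • (z + rootShift N k) = N • z := by
  rw [smul_add, nsmul_rootShift, add_zero]

@[simp]
theorem rootShift_zero (N : ℕ) [NeZero N] : rootShift N 0 = 0 := by
  simp [rootShift]

theorem Cmat_apply (N : ℕ) (m : Fin N → Circle2π → ℂ) (z : Circle2π) (k j : Fin N) :
    Cmat N m z k j = (Real.sqrt N : ℂ)⁻¹ * m j (z + rootShift N k) :=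
  rfl

theorem Cmat_add_rootShift_apply_zero {N : ℕ} [NeZero N] (m : Fin N → Circle2π → ℂ) (z : Circle2π)
    (k j : Fin N) : Cmat N m (z + rootShift N k) 0 j = Cmat N m z k j := by
  rw [Cmat_apply, rootShift_zero, add_zero, Cmat_apply]

theorem ae_forall_add_rootShift {E : Type*} (N : ℕ) {f g : Circle2π → E} (h : f =ᵐ[haarT] g) :
    ∀ᵐ z ∂haarT, ∀ k : Fin N, f (z + rootShift N k) = g (z + rootShift N k) :=
  ae_all_iff.2 fun _ => (measurePreserving_add_right haarT _).quasiMeasurePreserving.ae_eq_comp h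

theorem ae_eq_comp_nsmul {E : Type*} {N : ℕ} (hN : N ≠ 0) {f g : Circle2π → E}
    (h : f =ᵐ[haarT] g) : ∀ᵐ z ∂haarT, f (N • z) = g (N • z) := by
  have hmp : MeasurePreserving (fun z : Circle2π => N • z) haarT haarT := by
    simpa only [natCast_zsmul] using
      Measure.measurePreserving_zsmul haarT (n := N) (Int.natCast_ne_zero.2 hN)
  exact hmp.quasiMeasurePreserving.ae_eq_comp h

def IsFilterOperator (N : ℕ) (m : Fin N → Circle2π → ℂ) (T : HT →L[ℂ] HT) : Prop :=
  ∀ ξ : HT, ⇑(T ξ) =ᵐ[haarT] fun z =>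
    (Real.sqrt N : ℂ)⁻¹ * ∑ k : Fin N, m k z * ξ (N • z + rootShift N k)

def IsMatrixShift (N : ℕ) (m : Fin N → Circle2π → ℂ) (SC : HTn N →L[ℂ] HTn N) : Prop :=
  ∀ ξ : HTn N, ⇑(SC ξ) =ᵐ[haarT] fun z =>
    (WithLp.equiv 2 (Fin N → ℂ)).symm
      ((Cmat N m z).mulVec (WithLp.equiv 2 (Fin N → ℂ) (ξ (N • z))))

def IsPolyphaseEmbedding (N : ℕ) (V : HT →L[ℂ] HTn N) : Prop :=
  ∀ ξ : HT, ⇑(V ξ) =ᵐ[haarT] fun z =>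
    (WithLp.equiv 2 (Fin N → ℂ)).symm
      (fun k : Fin N => (Real.sqrt N : ℂ)⁻¹ * ξ (z + rootShift N k))

theorem IsMatrixShift.semiconj {N : ℕ} [NeZero N] {m : Fin N → Circle2π → ℂ}
    {T : HT →L[ℂ] HT} {SC : HTn N →L[ℂ] HTn N} {V : HT →L[ℂ] HTn N}
    (hT : IsFilterOperator N m T) (hSC : IsMatrixShift N m SC) (hV : IsPolyphaseEmbedding N V) :
    Function.Semiconj V T SC := by
  intro ξ
  apply Lp.ext
  filter_upwards [hSC (V ξ), ae_eq_comp_nsmul (NeZero.ne N) (hV ξ), hV (T ξ),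
    ae_forall_add_rootShift N (hT ξ)] with z hSCz hVNz hVz hTz
  rw [hVz, hSCz, hVNz]
  congr 1
  funext k
  simp only [Equiv.apply_symm_apply, Matrix.mulVec, dotProduct, Cmat_apply, hTz k,
    nsmul_add_rootShift, Finset.mul_sum]
  exact Finset.sum_congr rfl fun j _ => by ring

def polyphaseLeftInverse (N : ℕ) [NeZero N] (η : HTn N) : HT :=
  ((Real.sqrt N : ℂ) • EuclideanSpace.proj (0 : Fin N) : EuclideanSpace ℂ (Fin N) →L[ℂ] ℂ).compLp η

theorem coeFn_polyphaseLeftInverse (N : ℕ) [NeZero N] (η : HTn N) :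
    ⇑(polyphaseLeftInverse N η) =ᵐ[haarT] fun z => (Real.sqrt N : ℂ) * η z 0 :=
  ContinuousLinearMap.coeFn_compLp _ η

theorem sqrt_natCast_ne_zero (N : ℕ) [NeZero N] : (Real.sqrt N : ℂ) ≠ 0 :=
  Complex.ofReal_ne_zero.2 (Real.sqrt_ne_zero'.2 (Nat.cast_pos.2 (Nat.pos_of_neZero N)))

theorem IsPolyphaseEmbedding.leftInverse {N : ℕ} [NeZero N] {V : HT →L[ℂ] HTn N}
    (hV : IsPolyphaseEmbedding N V) : Function.LeftInverse (polyphaseLeftInverse N) V := by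
  intro ξ
  apply Lp.ext
  filter_upwards [coeFn_polyphaseLeftInverse N (V ξ), hV ξ] with z hPz hVz
  rw [hPz, hVz]
  simp [mul_inv_cancel_left₀ (sqrt_natCast_ne_zero N)]

theorem IsMatrixShift.range_subset {N : ℕ} [NeZero N] {m : Fin N → Circle2π → ℂ}
    {SC : HTn N →L[ℂ] HTn N} {V : HT →L[ℂ] HTn N}
    (hSC : IsMatrixShift N m SC) (hV : IsPolyphaseEmbedding N V) :
    Set.range SC ⊆ Set.range V := by
  rintro _ ⟨ζ, rfl⟩
  refine ⟨polyphaseLeftInverse N (SC ζ), Lp.ext ?_⟩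
  filter_upwards [hV (polyphaseLeftInverse N (SC ζ)),
    ae_forall_add_rootShift N (coeFn_polyphaseLeftInverse N (SC ζ)),
    ae_forall_add_rootShift N (hSC ζ), hSC ζ] with z hVz hPz hSCk hSCz
  rw [hVz, hSCz]
  congr 1
  funext k
  simp only [hPz k, hSCk k, inv_mul_cancel_left₀ (sqrt_natCast_ne_zero N), WithLp.equiv_symm_apply,
    WithLp.ofLp_toLp, Matrix.mulVec, dotProduct, nsmul_add_rootShift, Cmat_add_rootShift_apply_zero]

theorem unitary_part_of_dilation_eq_image_of_unitary_part_general
    (N : ℕ) (hN : 2 ≤ N)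
    (m : Fin N → Circle2π → ℂ)
    -- the isometry `T` on `L²(𝕋)`
    (T : HT →L[ℂ] HT)
    (hT : ∀ ξ : HT, ⇑(T ξ) =ᵐ[haarT] fun z =>
      (Real.sqrt N : ℂ)⁻¹ * ∑ k : Fin N,
        m k z * ξ (N • z + (((k : ℕ) : ℝ) * (2 * Real.pi / N) : ℝ)))
    -- the isometry `S_C` on `L²(𝕋; ℂᴺ)`
    (SC : HTn N →L[ℂ] HTn N)
    (hSC : ∀ ξ : HTn N, ⇑(SC ξ) =ᵐ[haarT] fun z =>
      (WithLp.equiv 2 (Fin N → ℂ)).symm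
        ((Cmat N m z).mulVec (WithLp.equiv 2 (Fin N → ℂ) (ξ (N • z)))))
    -- the isometric embedding `V : L²(𝕋) → L²(𝕋; ℂᴺ)`
    (V : HT →L[ℂ] HTn N)
    (hV : ∀ ξ : HT, ⇑(V ξ) =ᵐ[haarT] fun z =>
      (WithLp.equiv 2 (Fin N → ℂ)).symm
        (fun k : Fin N =>
          (Real.sqrt N : ℂ)⁻¹ * ξ (z + (((k : ℕ) : ℝ) * (2 * Real.pi / N) : ℝ)))) :
    SC.comp V = V.comp T ∧
    (⋂ k : ℕ, Set.range ⇑(SC ^ (k + 1))) = V '' (⋂ k : ℕ, Set.range ⇑(T ^ (k + 1))) := by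
  have : NeZero N := ⟨by omega⟩
  have hVT : Function.Semiconj V T SC := IsMatrixShift.semiconj hT hSC hV
  refine ⟨ContinuousLinearMap.ext fun ξ => (hVT ξ).symm, ?_⟩
  simp only [FunLike.coe_pow_eq_iterate]
  exact hVT.iInter_range_iterate_succ_eq_image (IsMatrixShift.range_subset hSC hV)
    (IsPolyphaseEmbedding.leftInverse hV).injective

/-- **Section 5 (Proposition Y.1).** The operator
`(Tξ)(z) = N^{-1/2} ∑_k m_k(z) ξ(ρ^k z^N)` is dilated by
`(S_C ξ)(z) = C(z) ξ(z^N)` via the isometric embedding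
`(Vξ)(z) = N^{-1/2}(ξ(z), ξ(ρz), …, ξ(ρ^{N-1}z))`, i.e. `S_C V = V T`; and the unitary
subspaces of the Wold decompositions agree: `H_U(S_C) = V(H_U(T))`. -/
theorem unitary_part_of_dilation_eq_image_of_unitary_part
    (N : ℕ) (hN : 2 ≤ N)
    (m : Fin N → Circle2π → ℂ)
    (hm_meas : ∀ k, Measurable (m k))
    (hC_unitary : ∀ᵐ z ∂haarT,
      Cmat N m z * star (Cmat N m z) = 1 ∧ star (Cmat N m z) * Cmat N m z = 1)
    -- the isometry `T` on `L²(𝕋)`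
    (T : HT →L[ℂ] HT)
    (hT : ∀ ξ : HT, ⇑(T ξ) =ᵐ[haarT] fun z =>
      (Real.sqrt N : ℂ)⁻¹ * ∑ k : Fin N,
        m k z * ξ (N • z + (((k : ℕ) : ℝ) * (2 * Real.pi / N) : ℝ)))
    -- the isometry `S_C` on `L²(𝕋; ℂᴺ)`
    (SC : HTn N →L[ℂ] HTn N)
    (hSC : ∀ ξ : HTn N, ⇑(SC ξ) =ᵐ[haarT] fun z =>
      (WithLp.equiv 2 (Fin N → ℂ)).symm
        ((Cmat N m z).mulVec (WithLp.equiv 2 (Fin N → ℂ) (ξ (N • z)))))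
    -- the isometric embedding `V : L²(𝕋) → L²(𝕋; ℂᴺ)`
    (V : HT →L[ℂ] HTn N)
    (hV : ∀ ξ : HT, ⇑(V ξ) =ᵐ[haarT] fun z =>
      (WithLp.equiv 2 (Fin N → ℂ)).symm
        (fun k : Fin N =>
          (Real.sqrt N : ℂ)⁻¹ * ξ (z + (((k : ℕ) : ℝ) * (2 * Real.pi / N) : ℝ)))) :
    SC.comp V = V.comp T ∧
    (⋂ k : ℕ, Set.range ⇑(SC ^ (k + 1))) = V '' (⋂ k : ℕ, Set.range ⇑(T ^ (k + 1))) :=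
  unitary_part_of_dilation_eq_image_of_unitary_part_general N hN m T hT SC hSC V hV
end
end

section
/- Let N ≥ 2 and let H be a Hilbert space. (a) If S_0, …, S_{N−1} are bounded operators on H satisfying the Cuntz relations S_i* S_j = δ_{ij}·1 and ∑_i S_i S_i* = 1, and S_0 is a shift (⋂_{n≥1} S_0^n H = {0}), then the operators T_k^{(j)} := S_0^{k−1} S_j for j = 1, …, N−1 and k = 1, 2, … satisfy T_{k₁}^{(j₁)*} T_{k₂}^{(j₂)} = δ_{j₁ j₂} δ_{k₁ k₂}·1 and ∑_{j=1}^{N−1} ∑_{k=1}^{∞} T_k^{(j)} T_k^{(j)*} = 1 (the sum converging in the strong operator topology), and moreover S_0 = ∑_{k=1}^{∞} ∑_{j=1}^{N−1} T_{k+1}^{(j)} T_k^{(j)*} (strongly) and S_j = T_1^{(j)} for j = 1, …, N−1. (b) Conversely, if operators T_k^{(j)} (j = 1, …, N−1, k ≥ 1) on H satisfy T_{k₁}^{(j₁)*} T_{k₂}^{(j₂)} = δ_{j₁ j₂} δ_{k₁ k₂}·1 and ∑_{j,k} T_k^{(j)} T_k^{(j)*} = 1, then S_0 := ∑_{k,j}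 T_{k+1}^{(j)} T_k^{(j)*} (strong convergence) and S_j := T_1^{(j)} satisfy the Cuntz relations, S_0 is a shift, and T_k^{(j)} = S_0^{k−1} S_j. -/
/-!
(a) With `s = S₀`, the Cuntz relation `1 - s s* = ∑_{j ≠ 0} S_j S_j*` telescopes: the range
projections of the isometries `s^k S_j` (`j ≠ 0`, `k < n`) add up to `1 - s^n s^n*`. These
isometries have mutually orthogonal ranges, so by Bessel's inequality the whole series converges,
hence so does `s^n s^n* ξ`; its limit lies in every closed subspace `s^m H`, so it vanishes when
`s` is a shift.

(b) Since `∑ T_p T_p* = 1` strongly, an operator `X` is determined by the products `X T_p`. All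
relations for `S₀ = ∑ T_{k+1}^{(j)} T_k^{(j)*}` are checked this way, starting from
`S₀ T_k^{(j)} = T_{k+1}^{(j)}`.
-/

open ContinuousLinearMap Filter Topology Finset

section StarRing

variable {A ι : Type*} [DecidableEq ι]

def PairwiseOrthogonalIsometries [Semiring A] [StarRing A] (S : ι → A) : Prop :=
  ∀ i j, star (S i) * S j = if i = j then 1 else 0

theorem star_pow_mul_pow_eq_one [Monoid A] [StarMul A] {a : A} (h : star a * a = 1) (n : ℕ) :
    star (a ^ n) * a ^ n = 1 := by
  induction n with
  | zero => simp
  | succ n ih => rw [pow_succ, star_mul, mul_assoc, ← mul_assoc (star (a ^ n)), ih, one_mul, h]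

theorem PairwiseOrthogonalIsometries.pow_mul [Semiring A] [StarRing A] {S : ι → A}
    (hS : PairwiseOrthogonalIsometries S) (i₀ : ι) :
    PairwiseOrthogonalIsometries fun p : {j // j ≠ i₀} × ℕ => S i₀ ^ p.2 * S p.1 := by
  intro p q
  wlog hle : p.2 ≤ q.2 generalizing p q
  · have hswap := congrArg star (this q p (by omega))
    rw [star_mul, star_star] at hswap
    rw [hswap]
    obtain rfl | hpq := eq_or_ne p q
    · simp
    · rw [if_neg hpq.symm, if_neg hpq, star_zero]
  obtain ⟨d, hd⟩ := Nat.exists_eq_add_of_le hle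
  have hcancel : star (S i₀ ^ p.2 * S p.1) * (S i₀ ^ q.2 * S q.1)
      = star (S p.1) * S i₀ ^ d * S q.1 := by
    have hiso : star (S i₀) * S i₀ = 1 := by simpa using hS i₀ i₀
    rw [hd, pow_add, star_mul, mul_assoc, ← mul_assoc (star (S i₀ ^ p.2)),
      ← mul_assoc (star (S i₀ ^ p.2)), star_pow_mul_pow_eq_one hiso, one_mul, mul_assoc]
  rw [hcancel]
  rcases d with _ | d
  · rw [pow_zero, mul_one, hS]
    simp [Prod.ext_iff, Subtype.ext_iff, hd]
  · rw [pow_succ', ← mul_assoc, hS, if_neg p.1.2, zero_mul, zero_mul, if_neg]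
    rintro rfl
    omega

theorem pairwiseOrthogonalIsometries_of_ne [Semiring A] [StarRing A] {S : ι → A} (i₀ : ι)
    (h₀ : star (S i₀) * S i₀ = 1) (h₀ne : ∀ j, j ≠ i₀ → star (S j) * S i₀ = 0)
    (hne : ∀ i j, i ≠ i₀ → j ≠ i₀ → star (S i) * S j = if i = j then 1 else 0) :
    PairwiseOrthogonalIsometries S := by
  intro i j
  by_cases hi : i = i₀ <;> by_cases hj : j = i₀
  · subst hi hj
    simp [h₀]
  · subst hi
    rw [if_neg (Ne.symm hj)]
    have := congrArg star (h₀ne j hj)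
    rwa [star_mul, star_star, star_zero] at this
  · subst hj
    rw [h₀ne i hi, if_neg hi]
  · exact hne i j hi hj

theorem sum_range_pow_mul_one_sub_mul_star_pow [Ring A] [StarRing A] (s : A) (n : ℕ) :
    ∑ k ∈ range n, s ^ k * (1 - s * star s) * star (s ^ k) = 1 - s ^ n * star (s ^ n) := by
  have htelescope : ∀ k, s ^ k * (1 - s * star s) * star (s ^ k)
      = s ^ k * star (s ^ k) - s ^ (k + 1) * star (s ^ (k + 1)) := by
    intro k
    rw [pow_succ, star_mul]
    noncomm_ring
  simp_rw [htelescope]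
  rw [sum_range_sub', pow_zero, star_one, mul_one]

theorem sum_product_range_pow_mul_mul_star [Ring A] [StarRing A] [Fintype ι] {S : ι → A}
    (hsum : ∑ i, S i * star (S i) = 1) (i₀ : ι) (n : ℕ) :
    ∑ p ∈ (univ : Finset {j // j ≠ i₀}) ×ˢ range n,
      S i₀ ^ p.2 * S p.1 * star (S i₀ ^ p.2 * S p.1) = 1 - S i₀ ^ n * star (S i₀ ^ n) := by
  have hrest : ∑ j : {j // j ≠ i₀}, S j * star (S j) = 1 - S i₀ * star (S i₀) := by
    rw [← hsum, Fintype.sum_eq_add_sum_subtype_ne _ i₀, add_sub_cancel_left]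
  rw [sum_product_right, ← sum_range_pow_mul_one_sub_mul_star_pow, ← hrest]
  refine sum_congr rfl fun k _ => ?_
  simp only [star_mul, mul_sum, sum_mul, mul_assoc]

end StarRing

theorem HasSum.tendsto_sum_univ_product_range {κ E : Type*} [Fintype κ] [AddCommMonoid E]
    [TopologicalSpace E] {f : κ × ℕ → E} {a : E} (hf : HasSum f a) :
    Tendsto (fun n => ∑ p ∈ (univ : Finset κ) ×ˢ range n, f p) atTop (𝓝 a) :=
  hf.comp <| tendsto_atTop_finset_of_monotone
    (fun _ _ hmn => product_subset_product_right (range_subset_range.2 hmn))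
    fun p => ⟨p.2 + 1, by simp⟩

section Hilbert

variable {H : Type*} [NormedAddCommGroup H] [InnerProductSpace ℂ H] [CompleteSpace H]
variable {ι : Type*} [DecidableEq ι]

theorem PairwiseOrthogonalIsometries.adjoint_apply {T : ι → H →L[ℂ] H}
    (hT : PairwiseOrthogonalIsometries T) (p q : ι) (x : H) :
    adjoint (T p) (T q x) = if p = q then x else 0 := by
  change (star (T p) * T q) x = _
  rw [hT p q]
  split_ifs <;> rfl

theorem PairwiseOrthogonalIsometries.summable {T : ι → H →L[ℂ] H}
    (hT : PairwiseOrthogonalIsometries T) (ξ : H) :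
    Summable fun p => T p (adjoint (T p) ξ) := by
  let V : ι → H →ₗᵢ[ℂ] H := fun p =>
    ⟨T p, (norm_map_iff_adjoint_comp_self (T p)).2 ((hT p p).trans (if_pos rfl))⟩
  have hV : OrthogonalFamily ℂ (fun _ => H) V := fun p q hpq x y => by
    change inner ℂ (T p x) (T q y) = 0
    rw [← adjoint_inner_right, hT.adjoint_apply, if_neg hpq, inner_zero_right]
  change Summable fun p => V p (adjoint (T p) ξ)
  rw [hV.summable_iff_norm_sq_summable]
  refine summable_of_sum_le (c := ‖ξ‖ ^ 2) (fun _ => sq_nonneg _) fun F => ?_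
  set x := ∑ p ∈ F, V p (adjoint (T p) ξ)
  have hx : ‖x‖ ^ 2 = ∑ p ∈ F, ‖adjoint (T p) ξ‖ ^ 2 := hV.norm_sum _ F
  have hre : ‖x‖ ^ 2 = RCLike.re (inner ℂ x ξ) := by
    rw [hx, sum_inner, map_sum]
    refine sum_congr rfl fun p _ => ?_
    change _ = RCLike.re (inner ℂ (T p (adjoint (T p) ξ)) ξ)
    rw [← adjoint_inner_right, inner_self_eq_norm_sq]
  have hxξ : ‖x‖ ≤ ‖ξ‖ := by
    have : ‖x‖ ^ 2 ≤ ‖x‖ * ‖ξ‖ := hre ▸ re_inner_le_norm x ξ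
    nlinarith [norm_nonneg x, norm_nonneg ξ]
  rw [← hx]
  gcongr

theorem eq_zero_of_tendsto_of_mem_range_pow {s : H →L[ℂ] H} (hs : star s * s = 1)
    (hshift : ⋂ n : ℕ, Set.range ⇑(s ^ (n + 1)) = {0}) {x : ℕ → H} {η : H}
    (hx : ∀ n, x n ∈ Set.range ⇑(s ^ n)) (hlim : Tendsto x atTop (𝓝 η)) : η = 0 := by
  rw [← Set.mem_singleton_iff, ← hshift, Set.mem_iInter]
  intro m
  have hclosed : IsClosed (Set.range ⇑(s ^ (m + 1))) :=
    ((isometry_iff_adjoint_comp_self _).2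
      (star_pow_mul_pow_eq_one hs (m + 1))).isClosedEmbedding.isClosed_range
  refine hclosed.mem_of_tendsto hlim (eventually_atTop.2 ⟨m + 1, fun n hn => ?_⟩)
  obtain ⟨y, hy⟩ := hx n
  refine ⟨(s ^ (n - (m + 1))) y, ?_⟩
  change (s ^ (m + 1) * s ^ (n - (m + 1))) y = x n
  rw [← pow_add, Nat.add_sub_cancel' hn, hy]

theorem PairwiseOrthogonalIsometries.hasSum_pow_mul_of_shift [Fintype ι] {S : ι → H →L[ℂ] H}
    (hS : PairwiseOrthogonalIsometries S) (hsum : ∑ i, S i * star (S i) = 1) (i₀ : ι)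
    (hshift : ⋂ n : ℕ, Set.range ⇑(S i₀ ^ (n + 1)) = {0}) (ξ : H) :
    HasSum (fun p : {j // j ≠ i₀} × ℕ =>
      (S i₀ ^ p.2 * S p.1) (adjoint (S i₀ ^ p.2 * S p.1) ξ)) ξ := by
  obtain ⟨σ, hσ⟩ := (hS.pow_mul i₀).summable ξ
  have hgrid : ∀ n, ∑ p ∈ (univ : Finset {j // j ≠ i₀}) ×ˢ range n,
      (S i₀ ^ p.2 * S p.1) (adjoint (S i₀ ^ p.2 * S p.1) ξ)
        = ξ - (S i₀ ^ n * star (S i₀ ^ n)) ξ := by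
    intro n
    change _ = (1 : H →L[ℂ] H) ξ - _
    rw [← sub_apply, ← sum_product_range_pow_mul_mul_star hsum i₀ n, _root_.sum_apply]
    rfl
  have hlim : Tendsto (fun n => (S i₀ ^ n * star (S i₀ ^ n)) ξ) atTop (𝓝 (ξ - σ)) := by
    have := (tendsto_const_nhds (x := ξ)).sub hσ.tendsto_sum_univ_product_range
    simpa only [hgrid, sub_sub_cancel] using this
  have hiso : star (S i₀) * S i₀ = 1 := by simpa using hS i₀ i₀
  have hdefect : ξ - σ = 0 :=
    eq_zero_of_tendsto_of_mem_range_pow hiso hshift (fun n => ⟨_, rfl⟩) hlim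
  rwa [← sub_eq_zero.1 hdefect] at hσ

end Hilbert

section OInfinity

variable {H : Type*} [NormedAddCommGroup H] [InnerProductSpace ℂ H] [CompleteSpace H]
variable {κ : Type*} {T : κ → ℕ → H →L[ℂ] H}
  (hsum : ∀ ξ, HasSum (fun p : κ × ℕ => T p.1 p.2 (adjoint (T p.1 p.2) ξ)) ξ)

include hsum in
theorem ext_of_hasSum_mul_adjoint {X Y : H →L[ℂ] H} (h : ∀ j k, X * T j k = Y * T j k) :
    X = Y := by
  ext ξ
  refine ((hsum ξ).mapL X).unique ?_
  convert (hsum ξ).mapL Y using 1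
  funext p
  exact congrArg (· (adjoint (T p.1 p.2) ξ)) (h p.1 p.2)

variable [DecidableEq κ] {s : H →L[ℂ] H}
  (hT : ∀ j₁ j₂ k₁ k₂, star (T j₁ k₁) * T j₂ k₂ = if j₁ = j₂ ∧ k₁ = k₂ then 1 else 0)
  (hs : ∀ ξ, HasSum (fun p : κ × ℕ => T p.1 (p.2 + 1) (adjoint (T p.1 p.2) ξ)) (s ξ))

include hT hs in
theorem shift_mul_eq_succ (j : κ) (k : ℕ) : s * T j k = T j (k + 1) := by
  ext ξ
  refine (hs (T j k ξ)).unique ?_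
  convert hasSum_ite_eq (j, k) (T j (k + 1) ξ) using 1
  funext p
  change T p.1 (p.2 + 1) ((star (T p.1 p.2) * T j k) ξ) = _
  rw [hT]
  obtain rfl | hp := eq_or_ne p (j, k)
  · simp
  · rw [if_neg hp, if_neg (by simpa [Prod.ext_iff] using hp), zero_apply, map_zero]

include hsum hT hs in
theorem star_succ_mul_shift (j : κ) (k : ℕ) : star (T j (k + 1)) * s = star (T j k) :=
  ext_of_hasSum_mul_adjoint hsum fun j' k' => by
    rw [mul_assoc, shift_mul_eq_succ hT hs, hT, hT]
    simp

include hsum hT hs in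
theorem star_zero_mul_shift (j : κ) : star (T j 0) * s = 0 :=
  ext_of_hasSum_mul_adjoint hsum fun j' k' => by
    rw [mul_assoc, shift_mul_eq_succ hT hs, hT, zero_mul]
    simp

include hsum hT hs in
theorem star_shift_mul_succ (j : κ) (k : ℕ) : star s * T j (k + 1) = T j k := by
  simpa using congrArg star (star_succ_mul_shift hsum hT hs j k)

include hsum hT hs in
theorem star_shift_mul_zero (j : κ) : star s * T j 0 = 0 := by
  simpa using congrArg star (star_zero_mul_shift hsum hT hs j)

include hsum hT hs in
theorem star_shift_mul_shift : star s * s = 1 :=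
  ext_of_hasSum_mul_adjoint hsum fun j k => by
    rw [mul_assoc, shift_mul_eq_succ hT hs, star_shift_mul_succ hsum hT hs, one_mul]

include hsum hT hs in
theorem shift_mul_star_add_sum_eq_one [Fintype κ] :
    s * star s + ∑ j, T j 0 * star (T j 0) = 1 :=
  ext_of_hasSum_mul_adjoint hsum fun j k => by
    simp only [add_mul, sum_mul, one_mul, mul_assoc, hT]
    rcases k with _ | k
    · simp [star_shift_mul_zero hsum hT hs]
    · simp [star_shift_mul_succ hsum hT hs, shift_mul_eq_succ hT hs]

include hT hs in
theorem eq_shift_pow_mul (j : κ) (k : ℕ) : T j k = s ^ k * T j 0 := by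
  induction k with
  | zero => rw [pow_zero, one_mul]
  | succ k ih => rw [pow_succ', mul_assoc, ← ih, shift_mul_eq_succ hT hs]

include hsum hT hs in
theorem iInter_range_shift_pow_eq_zero : ⋂ n : ℕ, Set.range ⇑(s ^ (n + 1)) = {0} := by
  have hvanish : ∀ j k, star (T j k) * s ^ (k + 1) = 0 := by
    intro j k
    induction k with
    | zero => rw [zero_add, pow_one, star_zero_mul_shift hsum hT hs]
    | succ k ih => rw [pow_succ', ← mul_assoc, star_succ_mul_shift hsum hT hs, ih]
  refine Set.eq_singleton_iff_unique_mem.2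
    ⟨Set.mem_iInter.2 fun n => ⟨0, map_zero _⟩, fun ξ hξ => (hsum ξ).unique ?_⟩
  convert hasSum_zero using 1
  funext p
  obtain ⟨η, rfl⟩ := Set.mem_iInter.1 hξ p.2
  change T p.1 p.2 ((star (T p.1 p.2) * s ^ (p.2 + 1)) η) = 0
  rw [hvanish, zero_apply, map_zero]

end OInfinity

/-- Here `T j k` is the paper's `T_{k+1}^{(j)}`, so `S 0 ^ k * S j` corresponds to `T_{k+1}^{(j)}`. -/
theorem cuntz_with_shift_iff_Oinfinity_family_general
    (N : ℕ) [NeZero N]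
    {H : Type*} [NormedAddCommGroup H] [InnerProductSpace ℂ H] [CompleteSpace H] :
    -- (a) from a Cuntz family with `S₀` a shift to an `𝒪_∞`-family
    (∀ S : Fin N → H →L[ℂ] H,
      (∀ i j, (ContinuousLinearMap.adjoint (S i)).comp (S j)
          = if i = j then (1 : H →L[ℂ] H) else 0) →
      (∑ i, (S i).comp (ContinuousLinearMap.adjoint (S i)) = (1 : H →L[ℂ] H)) →
      ((⋂ n : ℕ, Set.range ⇑(S 0 ^ (n + 1))) = {0}) →
      ((∀ (j₁ j₂ : Fin N), j₁ ≠ 0 → j₂ ≠ 0 → ∀ k₁ k₂ : ℕ,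
          (ContinuousLinearMap.adjoint ((S 0 ^ k₁).comp (S j₁))).comp ((S 0 ^ k₂).comp (S j₂))
            = if j₁ = j₂ ∧ k₁ = k₂ then (1 : H →L[ℂ] H) else 0)
        ∧ (∀ ξ : H, HasSum
            (fun p : {j : Fin N // j ≠ 0} × ℕ =>
              ((S 0 ^ p.2).comp (S p.1))
                (ContinuousLinearMap.adjoint ((S 0 ^ p.2).comp (S p.1)) ξ)) ξ)
        ∧ (∀ ξ : H, HasSum
            (fun p : {j : Fin N // j ≠ 0} × ℕ =>
              ((S 0 ^ (p.2 + 1)).comp (S p.1))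
                (ContinuousLinearMap.adjoint ((S 0 ^ p.2).comp (S p.1)) ξ)) (S 0 ξ))
        ∧ (∀ j : Fin N, j ≠ 0 → (S 0 ^ 0).comp (S j) = S j)))
    ∧
    -- (b) from an `𝒪_∞`-family back to a Cuntz family with `S₀` a shift
    (∀ T : {j : Fin N // j ≠ 0} → ℕ → H →L[ℂ] H,
      (∀ j₁ j₂ k₁ k₂, (ContinuousLinearMap.adjoint (T j₁ k₁)).comp (T j₂ k₂)
          = if j₁ = j₂ ∧ k₁ = k₂ then (1 : H →L[ℂ] H) else 0) →
      (∀ ξ : H, HasSum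
          (fun p : {j : Fin N // j ≠ 0} × ℕ =>
            (T p.1 p.2) (ContinuousLinearMap.adjoint (T p.1 p.2) ξ)) ξ) →
      ∀ S : Fin N → H →L[ℂ] H,
        (∀ ξ : H, HasSum
            (fun p : {j : Fin N // j ≠ 0} × ℕ =>
              (T p.1 (p.2 + 1)) (ContinuousLinearMap.adjoint (T p.1 p.2) ξ)) (S 0 ξ)) →
        (∀ (j : Fin N) (h : j ≠ 0), S j = T ⟨j, h⟩ 0) →
        ((∀ i j, (ContinuousLinearMap.adjoint (S i)).comp (S j)
            = if i = j then (1 : H →L[ℂ] H) else 0)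
          ∧ (∑ i, (S i).comp (ContinuousLinearMap.adjoint (S i)) = (1 : H →L[ℂ] H))
          ∧ ((⋂ n : ℕ, Set.range ⇑(S 0 ^ (n + 1))) = {0})
          ∧ (∀ (j : Fin N) (h : j ≠ 0) (k : ℕ), T ⟨j, h⟩ k = (S 0 ^ k).comp (S j)))) := by
  constructor
  · intro S hrel hsum hshift
    have hT := PairwiseOrthogonalIsometries.pow_mul hrel 0
    have hproj := PairwiseOrthogonalIsometries.hasSum_pow_mul_of_shift hrel hsum 0 hshift
    refine ⟨fun j₁ j₂ h₁ h₂ k₁ k₂ => ?_, hproj, fun ξ => ?_, fun j _ => by rw [pow_zero]; rfl⟩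
    · exact (hT (⟨j₁, h₁⟩, k₁) (⟨j₂, h₂⟩, k₂)).trans (by simp [Prod.ext_iff])
    · convert (hproj ξ).mapL (S 0) using 2 with p
      rw [pow_succ']
      rfl
  · intro T hrelT hsumT S hS0 hSj
    have hiso := star_shift_mul_shift hsumT hrelT hS0
    refine ⟨pairwiseOrthogonalIsometries_of_ne 0 hiso (fun j hj => ?_) (fun i j hi hj => ?_), ?_,
      iInter_range_shift_pow_eq_zero hsumT hrelT hS0, fun j h k => ?_⟩
    · rw [hSj j hj]
      exact star_zero_mul_shift hsumT hrelT hS0 _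
    · rw [hSj i hi, hSj j hj]
      exact (hrelT _ _ 0 0).trans (by simp)
    · rw [Fintype.sum_eq_add_sum_subtype_ne _ 0, ← shift_mul_star_add_sum_eq_one hsumT hrelT hS0]
      exact congrArg _ (sum_congr rfl fun j _ => by rw [hSj j j.2]; rfl)
    · rw [eq_shift_pow_mul hrelT hS0, ← hSj]
      rfl

/-- **Lemma 4.1.** A 1–1 correspondence between Cuntz families `S₀, …, S_{N-1}` with `S₀` a
shift, and `𝒪_∞`-families `T_k^{(j)}` (`j = 1, …, N-1`, `k ≥ 1`; here `T j k` denotes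
`T_{k+1}^{(j)}`) whose ranges sum to `1`.  The correspondence is
`T_k^{(j)} = S₀^{k-1} S_j`, `S₀ = ∑ T_{k+1}^{(j)} T_k^{(j)*}`, `S_j = T₁^{(j)}`. -/
theorem cuntz_with_shift_iff_Oinfinity_family
    (N : ℕ) (hN : 2 ≤ N) [NeZero N]
    {H : Type*} [NormedAddCommGroup H] [InnerProductSpace ℂ H] [CompleteSpace H] :
    -- (a) from a Cuntz family with `S₀` a shift to an `𝒪_∞`-family
    (∀ S : Fin N → H →L[ℂ] H,
      (∀ i j, (ContinuousLinearMap.adjoint (S i)).comp (S j)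
          = if i = j then (1 : H →L[ℂ] H) else 0) →
      (∑ i, (S i).comp (ContinuousLinearMap.adjoint (S i)) = (1 : H →L[ℂ] H)) →
      ((⋂ n : ℕ, Set.range ⇑(S 0 ^ (n + 1))) = {0}) →
      ((∀ (j₁ j₂ : Fin N), j₁ ≠ 0 → j₂ ≠ 0 → ∀ k₁ k₂ : ℕ,
          (ContinuousLinearMap.adjoint ((S 0 ^ k₁).comp (S j₁))).comp ((S 0 ^ k₂).comp (S j₂))
            = if j₁ = j₂ ∧ k₁ = k₂ then (1 : H →L[ℂ] H) else 0)
        ∧ (∀ ξ : H, HasSum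
            (fun p : {j : Fin N // j ≠ 0} × ℕ =>
              ((S 0 ^ p.2).comp (S p.1))
                (ContinuousLinearMap.adjoint ((S 0 ^ p.2).comp (S p.1)) ξ)) ξ)
        ∧ (∀ ξ : H, HasSum
            (fun p : {j : Fin N // j ≠ 0} × ℕ =>
              ((S 0 ^ (p.2 + 1)).comp (S p.1))
                (ContinuousLinearMap.adjoint ((S 0 ^ p.2).comp (S p.1)) ξ)) (S 0 ξ))
        ∧ (∀ j : Fin N, j ≠ 0 → (S 0 ^ 0).comp (S j) = S j)))
    ∧
    -- (b) from an `𝒪_∞`-family back to a Cuntz family with `S₀` a shift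
    (∀ T : {j : Fin N // j ≠ 0} → ℕ → H →L[ℂ] H,
      (∀ j₁ j₂ k₁ k₂, (ContinuousLinearMap.adjoint (T j₁ k₁)).comp (T j₂ k₂)
          = if j₁ = j₂ ∧ k₁ = k₂ then (1 : H →L[ℂ] H) else 0) →
      (∀ ξ : H, HasSum
          (fun p : {j : Fin N // j ≠ 0} × ℕ =>
            (T p.1 p.2) (ContinuousLinearMap.adjoint (T p.1 p.2) ξ)) ξ) →
      ∀ S : Fin N → H →L[ℂ] H,
        (∀ ξ : H, HasSum
            (fun p : {j : Fin N // j ≠ 0} × ℕ =>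
              (T p.1 (p.2 + 1)) (ContinuousLinearMap.adjoint (T p.1 p.2) ξ)) (S 0 ξ)) →
        (∀ (j : Fin N) (h : j ≠ 0), S j = T ⟨j, h⟩ 0) →
        ((∀ i j, (ContinuousLinearMap.adjoint (S i)).comp (S j)
            = if i = j then (1 : H →L[ℂ] H) else 0)
          ∧ (∑ i, (S i).comp (ContinuousLinearMap.adjoint (S i)) = (1 : H →L[ℂ] H))
          ∧ ((⋂ n : ℕ, Set.range ⇑(S 0 ^ (n + 1))) = {0})
          ∧ (∀ (j : Fin N) (h : j ≠ 0) (k : ℕ), T ⟨j, h⟩ k = (S 0 ^ k).comp (S j)))) :=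
  cuntz_with_shift_iff_Oinfinity_family_general N
end

section
/- Let N ≥ 2 and let S_0, …, S_{N−1} be bounded operators on a Hilbert space K satisfying the Cuntz relations S_i* S_j = δ_{ij}·1 and ∑_i S_i S_i* = 1, with S_0 a shift (⋂_{n≥1} S_0^n K = {0}). Then there exists a unitary operator V : ℓ²({1,2,3,…}; ⊕_{j=1}^{N−1} K) → K such that, setting S_i^+ := V* S_i V: (i) S_0^+ is the unilateral shift, i.e., for ψ = (ψ_k)_{k≥1} with ψ_k ∈ ⊕_{j=1}^{N−1} K one has (S_0^+ ψ)_1 = 0 and (S_0^+ ψ)_{k+1} = ψ_k for k ≥ 1; and (ii) for each j = 1, …, N−1, (S_j^+ ψ)_1 is the element of ⊕_{i=1}^{N−1} K whose j-th component is V ψ and whose other components are 0, while (S_j^+ ψ)_k = 0 for all k ≥ 2. -/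
set_option maxHeartbeats 1000000
set_option synthInstance.maxHeartbeats 400000

open MeasureTheory

noncomputable section

/-- **Theorem 4.2.** If `S₀, …, S_{N-1}` is a Cuntz family on `K` with `S₀` a shift, then there
is a unitary `V` from the Hardy space `ℓ²({1,2,…}; ⊕_{j=1}^{N-1} K)` (indexed here by `ℕ`,
with index `k` standing for `k+1`, and `⊕_{j=1}^{N-1} K` realized as `PiLp 2` over `Fin (N-1)`,
with index `i` standing for `j = i+1`) onto `K` such that `S₀⁺ = V* S₀ V` is the unilateral
shift and `S_j⁺ = V* S_j V` maps `ψ` to the element supported in position `1` whose `j`-th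
component is `V ψ`. -/
theorem cuntz_family_with_shift_hardy_space_realization
    (N : ℕ) (hN : 2 ≤ N) [NeZero N]
    {K : Type*} [NormedAddCommGroup K] [InnerProductSpace ℂ K] [CompleteSpace K]
    (S : Fin N → K →L[ℂ] K)
    (hCuntz₁ : ∀ i j, (ContinuousLinearMap.adjoint (S i)).comp (S j)
        = if i = j then (1 : K →L[ℂ] K) else 0)
    (hCuntz₂ : ∑ i, (S i).comp (ContinuousLinearMap.adjoint (S i)) = (1 : K →L[ℂ] K))
    (hshift : (⋂ n : ℕ, Set.range ⇑(S 0 ^ (n + 1))) = {0}) :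
    ∃ V : (lp (fun _ : ℕ => PiLp 2 fun _ : Fin (N - 1) => K) 2) ≃ₗᵢ[ℂ] K,
      -- (i) `S₀⁺` is the unilateral shift
      (∀ ψ : lp (fun _ : ℕ => PiLp 2 fun _ : Fin (N - 1) => K) 2,
        (V.symm (S 0 (V ψ))) 0 = 0 ∧
        ∀ k : ℕ, (V.symm (S 0 (V ψ))) (k + 1) = ψ k)
      ∧
      -- (ii) `S_j⁺ ψ` is supported in position `1`, with `j`-th component `V ψ`
      (∀ (i : Fin (N - 1)) (ψ : lp (fun _ : ℕ => PiLp 2 fun _ : Fin (N - 1) => K) 2),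
        (V.symm (S (Fin.cast (Nat.succ_pred_eq_of_pos (by omega)) i.succ) (V ψ))) 0
            = (WithLp.equiv 2 (Fin (N - 1) → K)).symm (fun i' => if i' = i then V ψ else 0) ∧
        ∀ k : ℕ,
          (V.symm (S (Fin.cast (Nat.succ_pred_eq_of_pos (by omega)) i.succ) (V ψ))) (k + 1)
            = 0) := by
  classical
  haveI : CompleteSpace (PiLp 2 (fun _ : Fin (N - 1) => K)) :=
    inferInstance
  have hNpos : 0 < N := by omega
  have hcast : N - 1 + 1 = N := Nat.succ_pred_eq_of_pos hNpos
  -- the embedding of indices `{1, …, N-1}` into `Fin N`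
  let jm : Fin (N - 1) → Fin N := fun i => Fin.cast hcast i.succ
  have hjval : ∀ i : Fin (N - 1), (jm i : ℕ) = (i : ℕ) + 1 := fun i => rfl
  have hj0 : ∀ i : Fin (N - 1), jm i ≠ 0 := by
    intro i h
    have := congrArg Fin.val h
    simp [hjval] at this
  have hjinj : Function.Injective jm := by
    intro a b h
    have := congrArg Fin.val h
    simp only [hjval] at this
    exact Fin.ext (by omega)
  -- basic inner-product identities from the Cuntz relations
  have hSinner : ∀ (a b : Fin N) (v w : K),
      (inner ℂ (S a v) (S b w) : ℂ) = if a = b then (inner ℂ v w : ℂ) else 0 := by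
    intro a b v w
    rw [← ContinuousLinearMap.adjoint_inner_right]
    have h1 : (ContinuousLinearMap.adjoint (S a)) (S b w)
        = (if a = b then (1 : K →L[ℂ] K) else 0) w := by
      rw [← hCuntz₁ a b]; rfl
    rw [h1]
    split_ifs <;> simp
  have hS0pow : ∀ (k : ℕ) (v w : K),
      (inner ℂ ((S 0 ^ k) v) ((S 0 ^ k) w) : ℂ) = (inner ℂ v w : ℂ) := by
    intro k
    induction k with
    | zero => intro v w; simp
    | succ n ih =>
      intro v w
      simp only [pow_succ, ContinuousLinearMap.mul_apply]
      rw [ih]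
      simpa using hSinner 0 0 v w
  -- the isometry `⊕_{j=1}^{N-1} K → K`, `x ↦ ∑ S_j x_j`
  let U₀ : (PiLp 2 fun _ : Fin (N - 1) => K) →ₗ[ℂ] K :=
    { toFun := fun x => ∑ i, S (jm i) (x i)
      map_add' := by
        intro x y
        simp [Finset.sum_add_distrib]
      map_smul' := by
        intro c x
        simp [Finset.smul_sum] }
  have hU₀apply : ∀ x : PiLp 2 fun _ : Fin (N - 1) => K,
      U₀ x = ∑ i, S (jm i) (x i) := fun _ => rfl
  have hU₀inner : ∀ x y : PiLp 2 fun _ : Fin (N - 1) => K,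
      (inner ℂ (U₀ x) (U₀ y) : ℂ) = (inner ℂ x y : ℂ) := by
    intro x y
    rw [hU₀apply, hU₀apply, sum_inner]
    have : ∀ i : Fin (N - 1),
        (inner ℂ (S (jm i) (x i)) (∑ i', S (jm i') (y i')) : ℂ) = inner ℂ (x i) (y i) := by
      intro i
      rw [inner_sum]
      have h2 : ∀ i' : Fin (N - 1),
          (inner ℂ (S (jm i) (x i)) (S (jm i') (y i')) : ℂ)
            = if i' = i then (inner ℂ (x i) (y i') : ℂ) else 0 := by
        intro i'
        rw [hSinner]
        by_cases h : i' = i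
        · simp [h]
        · have : jm i ≠ jm i' := fun hc => h (hjinj hc).symm
          simp [this, h]
      simp only [h2]
      simp
    rw [Finset.sum_congr rfl fun i _ => this i, PiLp.inner_apply]
  have hU₀single : ∀ (i : Fin (N - 1)) (v : K),
      U₀ ((WithLp.equiv 2 (Fin (N - 1) → K)).symm (fun i' => if i' = i then v else 0))
        = S (jm i) v := by
    intro i v
    rw [hU₀apply]
    have : ∀ i' : Fin (N - 1),
        S (jm i') (((WithLp.equiv 2 (Fin (N - 1) → K)).symm
          (fun i'' => if i'' = i then v else 0)) i')
          = if i' = i then S (jm i) v else 0 := by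
      intro i'
      by_cases h : i' = i <;> simp [PiLp.toLp_apply, h]
    rw [Finset.sum_congr rfl fun i' _ => this i']
    simp
  -- the orthogonal family `V_k = S₀^k ∘ U`
  let Vfam : ∀ _ : ℕ, (PiLp 2 fun _ : Fin (N - 1) => K) →ₗᵢ[ℂ] K := fun k =>
    LinearMap.isometryOfInner (((S 0 ^ k : K →L[ℂ] K) : K →ₗ[ℂ] K).comp U₀)
      (by intro x y; simp only [LinearMap.comp_apply, ContinuousLinearMap.coe_coe]
          rw [hS0pow, hU₀inner])
  have hVapp : ∀ (k : ℕ) (x : PiLp 2 fun _ : Fin (N - 1) => K),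
      Vfam k x = (S 0 ^ k) (U₀ x) := fun _ _ => rfl
  have hUorthS0 : ∀ (x : PiLp 2 fun _ : Fin (N - 1) => K) (c : K),
      (inner ℂ (U₀ x) (S 0 c) : ℂ) = 0 := by
    intro x c
    rw [hU₀apply, sum_inner]
    refine Finset.sum_eq_zero fun i _ => ?_
    rw [hSinner]
    simp [hj0 i]
  have hortho : OrthogonalFamily ℂ (fun _ : ℕ => PiLp 2 fun _ : Fin (N - 1) => K) Vfam := by
    have key : ∀ k m, k < m → ∀ x y : PiLp 2 fun _ : Fin (N - 1) => K,
        (inner ℂ (Vfam k x) (Vfam m y) : ℂ) = 0 := by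
      intro k m hkm x y
      obtain ⟨d, rfl⟩ : ∃ d, m = k + (d + 1) := ⟨m - k - 1, by omega⟩
      rw [hVapp, hVapp]
      have h1 : (S 0 ^ (k + (d + 1))) (U₀ y) = (S 0 ^ k) ((S 0 ^ (d + 1)) (U₀ y)) := by
        rw [pow_add]; rfl
      rw [h1, hS0pow]
      have h2 : (S 0 ^ (d + 1)) (U₀ y) = S 0 ((S 0 ^ d) (U₀ y)) := by
        rw [pow_succ']; rfl
      rw [h2, hUorthS0]
    intro k m hkm
    rcases lt_or_gt_of_ne hkm with h | h
    · exact key k m h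
    · intro x y
      rw [← inner_conj_symm, key m k h y x, map_zero]
  -- totality, using that `S₀` is a shift
  have hdense : (⨆ k : ℕ, LinearMap.range (Vfam k).toLinearMap).topologicalClosure = ⊤ := by
    rw [Submodule.topologicalClosure_eq_top_iff, Submodule.eq_bot_iff]
    intro y hy
    have hy' : ∀ (k : ℕ) (x : PiLp 2 fun _ : Fin (N - 1) => K),
        (inner ℂ (Vfam k x) y : ℂ) = 0 := by
      intro k x
      exact (Submodule.mem_orthogonal _ y).mp hy _
        (Submodule.mem_iSup_of_mem k (LinearMap.mem_range_self _ x))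
    have main : ∀ n : ℕ, ∃ z : K, (S 0 ^ n) z = y ∧
        ∀ (k : ℕ) (x : PiLp 2 fun _ : Fin (N - 1) => K), (inner ℂ (Vfam k x) z : ℂ) = 0 := by
      intro n
      induction n with
      | zero => exact ⟨y, by simp, hy'⟩
      | succ n ih =>
        obtain ⟨z, hz, hzperp⟩ := ih
        have h0 : ∀ (i : Fin (N - 1)) (v : K), (inner ℂ (S (jm i) v) z : ℂ) = 0 := by
          intro i v
          have := hzperp 0 ((WithLp.equiv 2 (Fin (N - 1) → K)).symm
            (fun i' => if i' = i then v else 0))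
          rw [hVapp, hU₀single] at this
          simpa using this
        have hadjz : ∀ i : Fin (N - 1), ContinuousLinearMap.adjoint (S (jm i)) z = 0 := by
          intro i
          have h1 := h0 i (ContinuousLinearMap.adjoint (S (jm i)) z)
          rw [← ContinuousLinearMap.adjoint_inner_right] at h1
          rwa [inner_self_eq_zero] at h1
        have hadjz' : ∀ i : Fin N, i ≠ 0 → ContinuousLinearMap.adjoint (S i) z = 0 := by
          intro i hi
          have hival : (i : ℕ) ≠ 0 := by
            intro h; exact hi (Fin.ext (by simp [h]))
          have : ∃ i' : Fin (N - 1), jm i' = i := by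
            refine ⟨⟨(i : ℕ) - 1, by omega⟩, Fin.ext ?_⟩
            simp only [hjval]
            omega
          obtain ⟨i', rfl⟩ := this
          exact hadjz i'
        have hz0 : S 0 (ContinuousLinearMap.adjoint (S 0) z) = z := by
          have hid := ContinuousLinearMap.ext_iff.mp hCuntz₂ z
          simp only [ContinuousLinearMap.sum_apply, ContinuousLinearMap.comp_apply,
            ContinuousLinearMap.one_apply] at hid
          have hone : (∑ i : Fin N, S i (ContinuousLinearMap.adjoint (S i) z))
              = S 0 (ContinuousLinearMap.adjoint (S 0) z) :=
            Finset.sum_eq_single_of_mem 0 (Finset.mem_univ 0)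
              (fun i _ hi => by rw [hadjz' i hi, map_zero])
          rw [← hone]
          exact hid
        refine ⟨ContinuousLinearMap.adjoint (S 0) z, ?_, ?_⟩
        · rw [pow_succ, ContinuousLinearMap.mul_apply, hz0, hz]
        · intro k x
          rw [ContinuousLinearMap.adjoint_inner_right]
          have : S 0 (Vfam k x) = Vfam (k + 1) x := by
            rw [hVapp, hVapp, pow_succ']; rfl
          rw [this]
          exact hzperp (k + 1) x
    have hyI : y ∈ ⋂ n : ℕ, Set.range ⇑(S 0 ^ (n + 1)) := by
      simp only [Set.mem_iInter]
      intro n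
      obtain ⟨z, hz, -⟩ := main (n + 1)
      exact ⟨z, hz⟩
    rw [hshift] at hyI
    exact hyI
  have hsum' : IsHilbertSum ℂ (fun _ : ℕ => PiLp 2 fun _ : Fin (N - 1) => K) Vfam :=
    IsHilbertSum.mk hortho hdense.ge
  refine ⟨hsum'.linearIsometryEquiv.symm, ?_, ?_⟩
  · -- (i)
    intro ψ
    set V := hsum'.linearIsometryEquiv.symm with hV
    -- the shifted sequence
    have hψs : Summable fun k => ‖ψ k‖ ^ (2 : ENNReal).toReal :=
      (memℓp_gen_iff (by norm_num)).1 (lp.memℓp ψ)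
    have hmem : Memℓp (fun k : ℕ =>
        match k with
        | 0 => (0 : PiLp 2 (fun _ : Fin (N - 1) => K))
        | (n + 1) => ψ n) 2 := by
      apply memℓp_gen
      rw [← summable_nat_add_iff 1]
      exact hψs
    set φ : lp (fun _ : ℕ => PiLp 2 fun _ : Fin (N - 1) => K) 2 := ⟨_, hmem⟩ with hφ
    have hφ0 : (φ : ∀ _ : ℕ, PiLp 2 fun _ : Fin (N - 1) => K) 0 = 0 := rfl
    have hφs : ∀ k : ℕ, (φ : ∀ _ : ℕ, PiLp 2 fun _ : Fin (N - 1) => K) (k + 1) = ψ k :=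
      fun _ => rfl
    have key : S 0 (V ψ) = V φ := by
      have ht : ∀ χ : lp (fun _ : ℕ => PiLp 2 fun _ : Fin (N - 1) => K) 2,
          V χ = ∑' k, Vfam k (χ k) := fun χ => hsum'.linearIsometryEquiv_symm_apply χ
      rw [ht ψ, ht φ]
      rw [ContinuousLinearMap.map_tsum _ (hortho.summable_of_lp ψ)]
      have h1 : ∀ k : ℕ, S 0 (Vfam k (ψ k)) = Vfam (k + 1) (φ (k + 1)) := by
        intro k
        rw [hφs, hVapp, hVapp, pow_succ']; rfl
      rw [tsum_congr h1]
      have hsupp : Function.support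
          (fun k => Vfam k ((φ : ∀ _ : ℕ, PiLp 2 fun _ : Fin (N - 1) => K) k))
            ⊆ Set.range Nat.succ := by
        intro k hk
        cases k with
        | zero => exact absurd (map_zero (Vfam 0)) hk
        | succ n => exact ⟨n, rfl⟩
      exact Function.Injective.tsum_eq Nat.succ_injective hsupp
    have hfinal : V.symm (S 0 (V ψ)) = φ := by
      rw [key, LinearIsometryEquiv.symm_apply_apply]
    constructor
    · rw [hfinal]
    · intro k; rw [hfinal]
  · -- (ii)
    intro i ψ
    set V := hsum'.linearIsometryEquiv.symm with hV
    set x : PiLp 2 fun _ : Fin (N - 1) => K :=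
      (WithLp.equiv 2 (Fin (N - 1) → K)).symm (fun i' => if i' = i then V ψ else 0) with hx
    have key : S (jm i) (V ψ) = V ((lp.single 2 0 x : lp (fun _ : ℕ => PiLp 2 fun _ : Fin (N - 1) => K) 2)) := by
      have h1 : V ((lp.single 2 0 x : lp (fun _ : ℕ => PiLp 2 fun _ : Fin (N - 1) => K) 2)) = Vfam 0 x :=
        hsum'.linearIsometryEquiv_symm_apply_single x
      rw [h1, hVapp]
      simp only [pow_zero, ContinuousLinearMap.one_apply]
      exact (hU₀single i (V ψ)).symm
    have hfinal : V.symm (S (jm i) (V ψ)) = (lp.single 2 0 x : lp (fun _ : ℕ => PiLp 2 fun _ : Fin (N - 1) => K) 2) := by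
      rw [key, LinearIsometryEquiv.symm_apply_apply]
    constructor
    · show (V.symm (S (jm i) (V ψ))) 0 = x
      rw [hfinal]
      exact lp.single_apply_self _ _ _
    · intro k
      show (V.symm (S (jm i) (V ψ))) (k + 1) = 0
      rw [hfinal]
      exact lp.single_apply_ne _ _ _ (Nat.succ_ne_zero k)
end
end
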